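/- arXiv:1701.08579 — 2 statements merged into one kernel-verified Lean document; each statement's English description precedes it below -/
import Mathlib

section
/- Let μ be a probability measure on ℝ with compact support, which is not a Dirac measure (i.e. is not concentrated at a single point). Set l = inf supp(μ) and h = sup supp(μ). Then for every σ > 0, t > 0 and y ∈ ℝ, the posterior mean m(t,y) := ∫ u μ^{(σ)}_{t,y}(du) satisfies l < m(t,y) < h. -/
open MeasureTheory
open scoped ENNReal NNReal

/-- The Bayes posterior `μ^{(σ)}_{t,y}`. -/
noncomputable def posterior (μ : Measure ℝ) (σ t y : ℝ) : Measure ℝ :=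
  μ.withDensity fun u => ENNReal.ofReal
    (Real.exp ((2 * u * y - u ^ 2 * t) / (2 * σ ^ 2)) /
      ∫ v, Real.exp ((2 * v * y - v ^ 2 * t) / (2 * σ ^ 2)) ∂μ)

/-- The topological support of a measure: points all of whose neighbourhoods have
positive measure. -/
def msupport (μ : Measure ℝ) : Set ℝ := {x | ∀ U ∈ nhds x, μ U ≠ 0}

lemma msupport_compl_null (μ : Measure ℝ) : μ (msupport μ)ᶜ = 0 := by
  apply measure_null_of_locally_null
  intro x hx
  simp only [msupport, Set.mem_compl_iff, Set.mem_setOf_eq, not_forall] at hx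
  obtain ⟨U, hU, hU0⟩ := hx
  refine ⟨U, nhdsWithin_le_nhds hU, by simpa using hU0⟩

lemma msupport_ae (μ : Measure ℝ) : ∀ᵐ x ∂μ, x ∈ msupport μ := by
  rw [MeasureTheory.ae_iff]
  exact msupport_compl_null μ

lemma integrable_of_cont (μ : Measure ℝ) [IsFiniteMeasure μ]
    (hcpt : IsCompact (msupport μ)) {φ : ℝ → ℝ} (hφ : Continuous φ) :
    Integrable φ μ := by
  have h1 : IntegrableOn φ (msupport μ) μ := hφ.continuousOn.integrableOn_compact hcpt
  have h2 := (integrable_indicator_iff hcpt.measurableSet).2 h1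
  exact h2.congr ((msupport_ae μ).mono fun x hx => Set.indicator_of_mem hx φ)

lemma dirac_of_singleton (μ : Measure ℝ) [IsProbabilityMeasure μ] {a : ℝ}
    (ha : μ {a} = 1) : μ = Measure.dirac a := by
  have hc : μ {a}ᶜ = 0 := by
    have := measure_compl (measurableSet_singleton a) (measure_ne_top μ _)
    rw [ha, measure_univ] at this
    simpa using this
  ext s hs
  rw [Measure.dirac_apply' a hs]
  by_cases h : a ∈ s
  · rw [Set.indicator_of_mem h]
    refine le_antisymm prob_le_one ?_
    calc (1 : ℝ≥0∞) = μ {a} := ha.symm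
      _ ≤ μ s := measure_mono (Set.singleton_subset_iff.2 h)
  · rw [Set.indicator_of_notMem h]
    refine le_antisymm (le_trans (measure_mono ?_) hc.le) zero_le
    intro x hx
    simp only [Set.mem_compl_iff, Set.mem_singleton_iff]
    rintro rfl
    exact h hx

/-- For a compactly supported, non-Dirac prior, the posterior mean lies strictly between
`l = inf supp(μ)` and `h = sup supp(μ)`. -/
theorem posterior_mean_strictly_between
    (μ : Measure ℝ) [IsProbabilityMeasure μ] (hcpt : IsCompact (msupport μ))
    (hnd : ∀ a : ℝ, μ ≠ Measure.dirac a)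
    (σ t y : ℝ) (hσ : 0 < σ) (ht : 0 < t) :
    sInf (msupport μ) < ∫ u, u ∂(posterior μ σ t y) ∧
      ∫ u, u ∂(posterior μ σ t y) < sSup (msupport μ) := by
  set K := msupport μ with hKdef
  set f : ℝ → ℝ := fun u => Real.exp ((2 * u * y - u ^ 2 * t) / (2 * σ ^ 2)) with hfdef
  set Z : ℝ := ∫ v, f v ∂μ with hZdef
  have hfc : Continuous f := by fun_prop
  have hfi : Integrable f μ := integrable_of_cont μ hcpt hfc
  have hfpos : ∀ u, 0 < f u := fun u => Real.exp_pos _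
  have hZpos : 0 < Z := by
    rw [hZdef, integral_pos_iff_support_of_nonneg_ae
      (Filter.Eventually.of_forall fun u => (hfpos u).le) hfi]
    have hsup : Function.support f = Set.univ := Set.eq_univ_of_forall fun u => (hfpos u).ne'
    rw [hsup]
    simp
  have hKnull : μ Kᶜ = 0 := msupport_compl_null μ
  have hKne : K.Nonempty := by
    by_contra hne
    rw [Set.not_nonempty_iff_eq_empty] at hne
    rw [hne, Set.compl_empty] at hKnull
    exact one_ne_zero ((measure_univ (μ := μ)).symm.trans hKnull)
  set l := sInf K with hldef
  set r := sSup K with hrdef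
  have haeK : ∀ᵐ u ∂μ, u ∈ K := msupport_ae μ
  have haeIcc : ∀ᵐ u ∂μ, l ≤ u ∧ u ≤ r :=
    haeK.mono fun u hu => ⟨csInf_le hcpt.bddBelow hu, le_csSup hcpt.bddAbove hu⟩
  have hsing : ∀ a : ℝ, μ {a} < 1 := by
    intro a
    rcases lt_or_eq_of_le (prob_le_one : μ {a} ≤ 1) with hlt | heq
    · exact hlt
    · exact absurd (dirac_of_singleton μ heq) (hnd a)
  -- positivity of strict half lines
  have hhalf : ∀ a : ℝ, {u : ℝ | a ≤ u ∧ u ≤ a} ⊆ {a} := by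
    intro a u hu; exact le_antisymm hu.2 hu.1
  have hposlt : 0 < μ {u : ℝ | u < r} := by
    by_contra hc
    push_neg at hc
    have hc0 : μ {u : ℝ | u < r} = 0 := le_antisymm hc zero_le
    have hsub : {u : ℝ | r ≤ u} ⊆ {r} ∪ Kᶜ := by
      intro u hu
      by_cases huK : u ∈ K
      · exact Or.inl (le_antisymm (le_csSup hcpt.bddAbove huK) hu)
      · exact Or.inr huK
    have h1 : (1 : ℝ≥0∞) ≤ μ {u : ℝ | u < r} + μ {u : ℝ | r ≤ u} := by
      rw [← measure_univ (μ := μ)]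
      refine le_trans (measure_mono fun u _ => ?_) (measure_union_le _ _)
      exact lt_or_ge u r
    have h2 : μ {u : ℝ | r ≤ u} ≤ μ {r} :=
      le_trans (measure_mono hsub) (le_trans (measure_union_le _ _) (by rw [hKnull, add_zero]))
    rw [hc0, zero_add] at h1
    exact absurd (le_trans h1 h2) (not_le.2 (hsing r))
  have hposgt : 0 < μ {u : ℝ | l < u} := by
    by_contra hc
    push_neg at hc
    have hc0 : μ {u : ℝ | l < u} = 0 := le_antisymm hc zero_le
    have hsub : {u : ℝ | u ≤ l} ⊆ {l} ∪ Kᶜ := by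
      intro u hu
      by_cases huK : u ∈ K
      · exact Or.inl (le_antisymm hu (csInf_le hcpt.bddBelow huK))
      · exact Or.inr huK
    have h1 : (1 : ℝ≥0∞) ≤ μ {u : ℝ | l < u} + μ {u : ℝ | u ≤ l} := by
      rw [← measure_univ (μ := μ)]
      refine le_trans (measure_mono fun u _ => ?_) (measure_union_le _ _)
      exact (lt_or_ge l u)
    have h2 : μ {u : ℝ | u ≤ l} ≤ μ {l} :=
      le_trans (measure_mono hsub) (le_trans (measure_union_le _ _) (by rw [hKnull, add_zero]))
    rw [hc0, zero_add] at h1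
    exact absurd (le_trans h1 h2) (not_le.2 (hsing l))
  -- rewrite the posterior mean
  have hmeas : Measurable fun u => Real.toNNReal (f u / Z) :=
    (hfc.div_const Z).measurable.real_toNNReal
  have hpost : posterior μ σ t y
      = μ.withDensity (fun u => ((Real.toNNReal (f u / Z) : ℝ≥0) : ℝ≥0∞)) := rfl
  have hmean : ∫ u, u ∂(posterior μ σ t y) = ∫ u, (f u / Z) * u ∂μ := by
    rw [hpost, integral_withDensity_eq_integral_smul hmeas]
    refine integral_congr_ae (Filter.Eventually.of_forall fun u => ?_)
    simp [NNReal.smul_def, Real.coe_toNNReal _ (div_nonneg (hfpos u).le hZpos.le)]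
  have hone : ∫ u, f u / Z ∂μ = 1 := by
    rw [MeasureTheory.integral_div, ← hZdef, div_self hZpos.ne']
  have hint1 : Integrable (fun u => (f u / Z) * u) μ :=
    integrable_of_cont μ hcpt (by fun_prop)
  have hint2 : Integrable (fun u => f u / Z) μ := hfi.div_const Z
  constructor
  · have key : 0 < ∫ u, (f u / Z) * (u - l) ∂μ := by
      rw [integral_pos_iff_support_of_nonneg_ae
        (haeIcc.mono fun u hu =>
          mul_nonneg (div_nonneg (hfpos u).le hZpos.le) (sub_nonneg.2 hu.1))
        (integrable_of_cont μ hcpt (by fun_prop))]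
      refine lt_of_lt_of_le hposgt (measure_mono fun u hu => ?_)
      exact (mul_pos (div_pos (hfpos u) hZpos) (sub_pos.2 hu)).ne'
    have heq : ∫ u, (f u / Z) * (u - l) ∂μ = (∫ u, (f u / Z) * u ∂μ) - l := by
      have : (fun u => (f u / Z) * (u - l)) = fun u => (f u / Z) * u - (f u / Z) * l := by
        funext u; ring
      rw [this, integral_sub hint1 (hint2.mul_const l), MeasureTheory.integral_mul_const, hone,
        one_mul]
    rw [hmean]
    linarith [heq ▸ key]
  · have key : 0 < ∫ u, (f u / Z) * (r - u) ∂μ := by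
      rw [integral_pos_iff_support_of_nonneg_ae
        (haeIcc.mono fun u hu =>
          mul_nonneg (div_nonneg (hfpos u).le hZpos.le) (sub_nonneg.2 hu.2))
        (integrable_of_cont μ hcpt (by fun_prop))]
      refine lt_of_lt_of_le hposlt (measure_mono fun u hu => ?_)
      exact (mul_pos (div_pos (hfpos u) hZpos) (sub_pos.2 hu)).ne'
    have heq : ∫ u, (f u / Z) * (r - u) ∂μ = r - ∫ u, (f u / Z) * u ∂μ := by
      have : (fun u => (f u / Z) * (r - u)) = fun u => (f u / Z) * r - (f u / Z) * u := by
        funext u; ring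
      rw [this, integral_sub (hint2.mul_const r) hint1, MeasureTheory.integral_mul_const, hone,
        one_mul]
    rw [hmean]
    linarith [heq ▸ key]
end

section
/- Let μ be a probability measure on ℝ with compact support, not a Dirac measure, and set l = inf supp(μ), h = sup supp(μ). Fix σ > 0 and t > 0, and define m(y) := ∫ u μ^{(σ)}_{t,y}(du). Then m(y) → l as y → −∞ and m(y) → h as y → +∞, and m is a continuous, strictly increasing bijection from ℝ onto the open interval (l, h). -/
open MeasureTheory Filter

lemma msupport_closed (μ : Measure ℝ) : IsClosed (msupport μ) := by
  rw [← isOpen_compl_iff, isOpen_iff_mem_nhds]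
  intro x hx
  simp only [msupport, Set.mem_compl_iff, Set.mem_setOf_eq, not_forall] at hx
  obtain ⟨U, hU, hU0⟩ := hx
  rw [not_not] at hU0
  obtain ⟨V, hVU, hVopen, hxV⟩ := mem_nhds_iff.1 hU
  filter_upwards [hVopen.mem_nhds hxV] with z hz
  simp only [msupport, Set.mem_compl_iff, Set.mem_setOf_eq, not_forall]
  exact ⟨V, hVopen.mem_nhds hz, fun h => h (measure_mono_null hVU hU0)⟩

lemma ae_mem_msupport (μ : Measure ℝ) : ∀ᵐ u ∂μ, u ∈ msupport μ := by
  rw [ae_iff]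
  have : {a | ¬ a ∈ msupport μ} = (msupport μ)ᶜ := rfl
  rw [this]
  apply measure_null_of_locally_null
  intro x hx
  simp only [msupport, Set.mem_compl_iff, Set.mem_setOf_eq, not_forall] at hx
  obtain ⟨U, hU, hU0⟩ := hx
  refine ⟨U, nhdsWithin_le_nhds hU, by simpa using hU0⟩

namespace PostAux

noncomputable def g (σ t y u : ℝ) : ℝ := Real.exp ((2 * u * y - u ^ 2 * t) / (2 * σ ^ 2))

lemma g_pos (σ t y u : ℝ) : 0 < g σ t y u := Real.exp_pos _

@[fun_prop]
lemma g_cont_u (σ t y : ℝ) : Continuous (g σ t y) := by unfold g; fun_prop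

@[fun_prop]
lemma g_cont_y (σ t u : ℝ) : Continuous (fun y => g σ t y u) := by unfold g; fun_prop

noncomputable def Z (μ : Measure ℝ) (σ t y : ℝ) : ℝ := ∫ u, g σ t y u ∂μ

noncomputable def N (μ : Measure ℝ) (σ t y : ℝ) : ℝ := ∫ u, u * g σ t y u ∂μ

variable {μ : Measure ℝ} [IsProbabilityMeasure μ]

lemma integrable_cont (hcpt : IsCompact (msupport μ)) {f : ℝ → ℝ} (hf : Continuous f) :
    Integrable f μ := by
  obtain ⟨C, hC⟩ := hcpt.exists_bound_of_continuousOn hf.continuousOn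
  refine ⟨hf.aestronglyMeasurable, HasFiniteIntegral.of_bounded (C := C) ?_⟩
  filter_upwards [ae_mem_msupport μ] with u hu using hC u hu

lemma Z_pos (hcpt : IsCompact (msupport μ)) (σ t y : ℝ) : 0 < Z μ σ t y := by
  rw [Z, integral_pos_iff_support_of_nonneg (fun u => (g_pos σ t y u).le)
    (integrable_cont hcpt (g_cont_u σ t y))]
  have hs : Function.support (g σ t y) = Set.univ := by
    ext u; simp [Function.mem_support, (g_pos σ t y u).ne']
  rw [hs]
  simp

lemma mean_eq (hcpt : IsCompact (msupport μ)) (σ t y : ℝ) :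
    ∫ u, u ∂(posterior μ σ t y) = N μ σ t y / Z μ σ t y := by
  have hZ := Z_pos hcpt σ t y
  have hmeas : Measurable fun u => (g σ t y u / Z μ σ t y).toNNReal :=
    (continuous_real_toNNReal.comp ((g_cont_u σ t y).div_const _)).measurable
  have h1 : posterior μ σ t y
      = μ.withDensity fun u => ((g σ t y u / Z μ σ t y).toNNReal : ENNReal) := rfl
  rw [h1, integral_withDensity_eq_integral_smul hmeas]
  simp only [NNReal.smul_def, smul_eq_mul]
  rw [N, ← integral_div]
  refine integral_congr_ae (Filter.Eventually.of_forall fun u => ?_)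
  simp only [Real.coe_toNNReal _ (div_nonneg (g_pos σ t y u).le hZ.le)]
  ring

lemma msupport_nonempty : (msupport μ).Nonempty := by
  by_contra hne
  rw [Set.not_nonempty_iff_eq_empty] at hne
  have h0 : μ Set.univ = 0 := by
    have := ae_mem_msupport μ
    rw [ae_iff] at this
    simpa [hne] using this
  simp [measure_univ] at h0

lemma ae_le_sSup (hcpt : IsCompact (msupport μ)) : ∀ᵐ u ∂μ, u ≤ sSup (msupport μ) := by
  filter_upwards [ae_mem_msupport μ] with u hu using le_csSup hcpt.bddAbove hu

lemma ae_sInf_le (hcpt : IsCompact (msupport μ)) : ∀ᵐ u ∂μ, sInf (msupport μ) ≤ u := by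
  filter_upwards [ae_mem_msupport μ] with u hu using csInf_le hcpt.bddBelow hu

lemma measure_Ioi_pos (hcpt : IsCompact (msupport μ)) {b : ℝ} (hb : b < sSup (msupport μ)) :
    0 < μ (Set.Ioi b) := by
  have hmem : sSup (msupport μ) ∈ msupport μ :=
    hcpt.sSup_mem (msupport_nonempty (μ := μ))
  exact zero_lt_iff.mpr (hmem (Set.Ioi b) (Ioi_mem_nhds hb))

lemma measure_Iio_pos (hcpt : IsCompact (msupport μ)) {a : ℝ} (ha : sInf (msupport μ) < a) :
    0 < μ (Set.Iio a) := by
  have hmem : sInf (msupport μ) ∈ msupport μ :=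
    hcpt.sInf_mem (msupport_nonempty (μ := μ))
  exact zero_lt_iff.mpr (hmem (Set.Iio a) (Iio_mem_nhds ha))

lemma sInf_lt_sSup (hcpt : IsCompact (msupport μ)) (hnd : ∀ a : ℝ, μ ≠ Measure.dirac a) :
    sInf (msupport μ) < sSup (msupport μ) := by
  by_contra hle
  push_neg at hle
  set a := sInf (msupport μ) with ha
  have hsub : msupport μ ⊆ {a} := by
    intro x hx
    have h1 : x ≤ a := le_trans (le_csSup hcpt.bddAbove hx) hle
    have h2 : a ≤ x := csInf_le hcpt.bddBelow hx
    exact le_antisymm h1 h2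
  have hae : μ {a}ᶜ = 0 := by
    have h0 : μ (msupport μ)ᶜ = 0 := by
      have := ae_mem_msupport μ
      rwa [ae_iff] at this
    exact measure_mono_null (Set.compl_subset_compl.mpr hsub) h0
  have key : ∀ s : Set ℝ, μ s = μ (s ∩ {a}) := by
    intro s
    refine le_antisymm ?_ (measure_mono Set.inter_subset_left)
    calc μ s ≤ μ ((s ∩ {a}) ∪ {a}ᶜ) := by
          refine measure_mono fun x hx => ?_
          by_cases hxa : x = a
          · exact Or.inl ⟨hx, hxa⟩
          · exact Or.inr hxa
      _ ≤ μ (s ∩ {a}) + μ {a}ᶜ := measure_union_le _ _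
      _ = μ (s ∩ {a}) := by rw [hae, add_zero]
  have hone : μ {a} = 1 := by
    have := key Set.univ
    simpa [measure_univ] using this.symm
  refine hnd a ?_
  ext s hs
  rw [Measure.dirac_apply' a hs, key s]
  by_cases hmem : a ∈ s
  · rw [Set.inter_eq_right.mpr (Set.singleton_subset_iff.2 hmem), hone]
    simp [Set.indicator, hmem]
  · rw [Set.inter_singleton_eq_empty.mpr hmem]
    simp [Set.indicator, hmem]

lemma ae_prod_mem (μ : Measure ℝ) [IsProbabilityMeasure μ] :
    ∀ᵐ z ∂(μ.prod μ), z.1 ∈ msupport μ ∧ z.2 ∈ msupport μ := by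
  have h0 : μ (msupport μ)ᶜ = 0 := by
    have := ae_mem_msupport μ
    rwa [ae_iff] at this
  rw [ae_iff]
  have hU : (μ.prod μ) (((msupport μ)ᶜ ×ˢ Set.univ) ∪ (Set.univ ×ˢ (msupport μ)ᶜ)) = 0 := by
    refine le_antisymm ?_ (by simp)
    calc (μ.prod μ) (((msupport μ)ᶜ ×ˢ Set.univ) ∪ (Set.univ ×ˢ (msupport μ)ᶜ))
        ≤ (μ.prod μ) ((msupport μ)ᶜ ×ˢ Set.univ) + (μ.prod μ) (Set.univ ×ˢ (msupport μ)ᶜ) :=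
          measure_union_le _ _
      _ = 0 := by rw [Measure.prod_prod, Measure.prod_prod, h0]; simp
  refine measure_mono_null (fun z hz => ?_) hU
  simp only [Set.mem_setOf_eq, not_and_or] at hz
  rcases hz with h | h
  · exact Or.inl ⟨h, Set.mem_univ _⟩
  · exact Or.inr ⟨Set.mem_univ _, h⟩

lemma integrable_cont2 {μ : Measure ℝ} [IsProbabilityMeasure μ]
    (hcpt : IsCompact (msupport μ)) {f : ℝ × ℝ → ℝ} (hf : Continuous f) :
    Integrable f (μ.prod μ) := by
  obtain ⟨C, hC⟩ := (hcpt.prod hcpt).exists_bound_of_continuousOn hf.continuousOn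
  refine ⟨hf.aestronglyMeasurable, HasFiniteIntegral.of_bounded (C := C) ?_⟩
  filter_upwards [ae_prod_mem μ] with z hz using hC z ⟨hz.1, hz.2⟩

lemma g_shift {σ : ℝ} (hσ : 0 < σ) (t y₁ y₂ u : ℝ) :
    g σ t y₂ u = g σ t y₁ u * Real.exp (u * ((y₂ - y₁) / σ ^ 2)) := by
  rw [g, g, ← Real.exp_add]
  congr 1
  have : σ ^ 2 ≠ 0 := by positivity
  field_simp
  ring

lemma key_lt (μ : Measure ℝ) [IsProbabilityMeasure μ] (hcpt : IsCompact (msupport μ))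
    (hnd : ∀ a : ℝ, μ ≠ Measure.dirac a) {σ t : ℝ} (hσ : 0 < σ) (ht : 0 < t)
    {y₁ y₂ : ℝ} (h12 : y₁ < y₂) :
    N μ σ t y₁ * Z μ σ t y₂ < N μ σ t y₂ * Z μ σ t y₁ := by
  set c : ℝ := (y₂ - y₁) / σ ^ 2 with hc
  have hcpos : 0 < c := by
    apply div_pos (by linarith) (by positivity)
  set F : ℝ × ℝ → ℝ := fun z =>
    (z.1 - z.2) * (g σ t y₂ z.1 * g σ t y₁ z.2 - g σ t y₁ z.1 * g σ t y₂ z.2) with hF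
  have hFcont : Continuous F := by
    apply Continuous.mul (by fun_prop)
    exact Continuous.sub
      (((g_cont_u σ t y₂).comp continuous_fst).mul ((g_cont_u σ t y₁).comp continuous_snd))
      (((g_cont_u σ t y₁).comp continuous_fst).mul ((g_cont_u σ t y₂).comp continuous_snd))
  have hFnonneg : ∀ z, 0 ≤ F z := by
    rintro ⟨u, v⟩
    have hrw : F (u, v) = (g σ t y₁ u * g σ t y₁ v) *
        ((u - v) * (Real.exp (u * c) - Real.exp (v * c))) := by
      simp only [hF]
      rw [g_shift hσ t y₁ y₂ u, g_shift hσ t y₁ y₂ v]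
      ring
    rw [hrw]
    refine mul_nonneg (mul_nonneg (g_pos σ t y₁ u).le (g_pos σ t y₁ v).le) ?_
    rcases le_total u v with huv | huv
    · have := Real.exp_le_exp.2 (mul_le_mul_of_nonneg_right huv hcpos.le)
      nlinarith
    · have := Real.exp_le_exp.2 (mul_le_mul_of_nonneg_right huv hcpos.le)
      nlinarith
  -- the integral of F is positive
  have hFint : Integrable F (μ.prod μ) := integrable_cont2 hcpt hFcont
  have hsupp : 0 < ∫ z, F z ∂(μ.prod μ) := by
    rw [integral_pos_iff_support_of_nonneg hFnonneg hFint]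
    set m := (sInf (msupport μ) + sSup (msupport μ)) / 2 with hm
    have hlh := sInf_lt_sSup hcpt hnd
    have h1 : 0 < μ (Set.Iio m) := measure_Iio_pos hcpt (by rw [hm]; linarith)
    have h2 : 0 < μ (Set.Ioi m) := measure_Ioi_pos hcpt (by rw [hm]; linarith)
    have hsub : Set.Iio m ×ˢ Set.Ioi m ⊆ Function.support F := by
      rintro ⟨u, v⟩ ⟨hu, hv⟩
      have huv : u < v := lt_trans hu hv
      have hrw : F (u, v) = (g σ t y₁ u * g σ t y₁ v) *
          ((u - v) * (Real.exp (u * c) - Real.exp (v * c))) := by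
        simp only [hF]
        rw [g_shift hσ t y₁ y₂ u, g_shift hσ t y₁ y₂ v]
        ring
      have hexp : Real.exp (u * c) < Real.exp (v * c) :=
        Real.exp_lt_exp.2 (by nlinarith)
      simp only [Function.mem_support, hrw]
      refine mul_ne_zero (mul_pos (g_pos σ t y₁ u) (g_pos σ t y₁ v)).ne'
        (mul_ne_zero (by intro h; nlinarith) ?_)
      intro h; nlinarith
    calc (0 : ENNReal) < μ (Set.Iio m) * μ (Set.Ioi m) :=
          ENNReal.mul_pos h1.ne' h2.ne'
      _ = (μ.prod μ) (Set.Iio m ×ˢ Set.Ioi m) := (Measure.prod_prod _ _).symm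
      _ ≤ (μ.prod μ) (Function.support F) := measure_mono hsub
  -- rewrite the integral of F as the symmetrized difference
  have e1 : N μ σ t y₂ * Z μ σ t y₁ =
      ∫ z, (z.1 * g σ t y₂ z.1) * g σ t y₁ z.2 ∂(μ.prod μ) :=
    (integral_prod_mul (fun u => u * g σ t y₂ u) (fun v => g σ t y₁ v)).symm
  have e2 : N μ σ t y₁ * Z μ σ t y₂ =
      ∫ z, (z.1 * g σ t y₁ z.1) * g σ t y₂ z.2 ∂(μ.prod μ) :=
    (integral_prod_mul (fun u => u * g σ t y₁ u) (fun v => g σ t y₂ v)).symm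
  have e3 : Z μ σ t y₁ * N μ σ t y₂ =
      ∫ z, g σ t y₁ z.1 * (z.2 * g σ t y₂ z.2) ∂(μ.prod μ) :=
    (integral_prod_mul (fun u => g σ t y₁ u) (fun v => v * g σ t y₂ v)).symm
  have e4 : Z μ σ t y₂ * N μ σ t y₁ =
      ∫ z, g σ t y₂ z.1 * (z.2 * g σ t y₁ z.2) ∂(μ.prod μ) :=
    (integral_prod_mul (fun u => g σ t y₂ u) (fun v => v * g σ t y₁ v)).symm
  have i1 : Integrable (fun z : ℝ × ℝ => (z.1 * g σ t y₂ z.1) * g σ t y₁ z.2) (μ.prod μ) :=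
    integrable_cont2 hcpt (by fun_prop [g_cont_u])
  have i2 : Integrable (fun z : ℝ × ℝ => (z.1 * g σ t y₁ z.1) * g σ t y₂ z.2) (μ.prod μ) :=
    integrable_cont2 hcpt (by fun_prop [g_cont_u])
  have i3 : Integrable (fun z : ℝ × ℝ => g σ t y₁ z.1 * (z.2 * g σ t y₂ z.2)) (μ.prod μ) :=
    integrable_cont2 hcpt (by fun_prop [g_cont_u])
  have i4 : Integrable (fun z : ℝ × ℝ => g σ t y₂ z.1 * (z.2 * g σ t y₁ z.2)) (μ.prod μ) :=
    integrable_cont2 hcpt (by fun_prop [g_cont_u])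
  have key : 2 * (N μ σ t y₂ * Z μ σ t y₁ - N μ σ t y₁ * Z μ σ t y₂)
      = ∫ z, F z ∂(μ.prod μ) := by
    have hNZ : N μ σ t y₂ * Z μ σ t y₁ - N μ σ t y₁ * Z μ σ t y₂
        + (Z μ σ t y₁ * N μ σ t y₂ - Z μ σ t y₂ * N μ σ t y₁)
        = ∫ z, F z ∂(μ.prod μ) := by
      have hsplit : ∫ z, F z ∂(μ.prod μ)
          = ∫ z : ℝ × ℝ, ((z.1 * g σ t y₂ z.1 * g σ t y₁ z.2
              - z.1 * g σ t y₁ z.1 * g σ t y₂ z.2)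
            + (g σ t y₁ z.1 * (z.2 * g σ t y₂ z.2)
              - g σ t y₂ z.1 * (z.2 * g σ t y₁ z.2))) ∂(μ.prod μ) := by
        refine integral_congr_ae (Filter.Eventually.of_forall fun z => ?_)
        simp only [hF]
        ring
      have h5 := integral_sub i1 i2
      have h6 := integral_sub i3 i4
      have h7 := integral_add (i1.sub i2) (i3.sub i4)
      beta_reduce at h5 h6 h7
      simp only [Pi.sub_apply] at h7
      rw [e1, e2, e3, e4, hsplit]
      rw [h7, h5, h6]
    linarith [hNZ]
  linarith [hsupp, key]

lemma exists_R {μ : Measure ℝ} (hcpt : IsCompact (msupport μ)) :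
    ∃ R : ℝ, 0 ≤ R ∧ ∀ x ∈ msupport μ, |x| ≤ R := by
  obtain ⟨C, hC⟩ := hcpt.exists_bound_of_continuousOn continuous_id.continuousOn
  exact ⟨|C|, abs_nonneg C, fun x hx => le_trans (hC x hx) (le_abs_self C)⟩

lemma cont_integral (hcpt : IsCompact (msupport μ)) {σ t : ℝ} (hσ : 0 < σ)
    {f : ℝ → ℝ} (hf : Continuous f) :
    Continuous (fun y => ∫ u, f u * g σ t y u ∂μ) := by
  obtain ⟨R, hR0, hR⟩ := exists_R hcpt
  obtain ⟨Cf, hCf⟩ := hcpt.exists_bound_of_continuousOn hf.continuousOn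
  rw [continuous_iff_continuousAt]
  intro y₀
  set M : ℝ := (2 * R * (|y₀| + 1) + R ^ 2 * |t|) / (2 * σ ^ 2) with hM
  apply continuousAt_of_dominated (bound := fun _ => |Cf| * Real.exp M)
  · exact Filter.Eventually.of_forall fun y =>
      (hf.mul (g_cont_u σ t y)).aestronglyMeasurable
  · filter_upwards [Metric.ball_mem_nhds y₀ one_pos] with y hy
    filter_upwards [ae_mem_msupport μ] with u hu
    have hu' : |u| ≤ R := hR u hu
    have hys : |y| ≤ |y₀| + 1 := by
      have h' := abs_sub_abs_le_abs_sub y y₀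
      rw [Metric.mem_ball, Real.dist_eq] at hy
      linarith
    have habs2 : 2 * u * y - u ^ 2 * t ≤ 2 * R * (|y₀| + 1) + R ^ 2 * |t| := by
      have h1 : 2 * u * y ≤ 2 * R * (|y₀| + 1) := by
        calc 2 * u * y ≤ |2 * u * y| := le_abs_self _
          _ = 2 * (|u| * |y|) := by rw [abs_mul, abs_mul]; norm_num; ring
          _ ≤ 2 * (R * (|y₀| + 1)) := by
              have : |u| * |y| ≤ R * (|y₀| + 1) :=
                mul_le_mul hu' hys (abs_nonneg y) hR0
              linarith
          _ = 2 * R * (|y₀| + 1) := by ring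
      have h2 : -(u ^ 2 * t) ≤ R ^ 2 * |t| := by
        have hu2 : u ^ 2 ≤ R ^ 2 := by nlinarith [abs_nonneg u, sq_abs u]
        calc -(u ^ 2 * t) ≤ |u ^ 2 * t| := neg_le_abs _
          _ = u ^ 2 * |t| := by rw [abs_mul, abs_of_nonneg (sq_nonneg u)]
          _ ≤ R ^ 2 * |t| := mul_le_mul_of_nonneg_right hu2 (abs_nonneg t)
      linarith
    have hgu : g σ t y u ≤ Real.exp M := by
      apply Real.exp_le_exp.2
      rw [hM]
      gcongr
    have hfu : |f u| ≤ |Cf| := le_trans (hCf u hu) (le_abs_self Cf)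
    calc ‖f u * g σ t y u‖ = |f u| * g σ t y u := by
          rw [norm_mul, Real.norm_eq_abs, Real.norm_eq_abs,
            abs_of_pos (g_pos σ t y u)]
      _ ≤ |Cf| * Real.exp M :=
          mul_le_mul hfu hgu (g_pos σ t y u).le (abs_nonneg Cf)
  · exact integrable_const _
  · exact Filter.Eventually.of_forall fun u =>
      (continuous_const.mul (g_cont_y σ t u)).continuousAt

lemma Z_cont (hcpt : IsCompact (msupport μ)) {σ t : ℝ} (hσ : 0 < σ) :
    Continuous (fun y => Z μ σ t y) := by
  have := cont_integral hcpt (σ := σ) (t := t) hσ continuous_const (f := fun _ => (1:ℝ))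
  simpa [Z] using this

lemma N_cont (hcpt : IsCompact (msupport μ)) {σ t : ℝ} (hσ : 0 < σ) :
    Continuous (fun y => N μ σ t y) :=
  cont_integral hcpt hσ continuous_id

lemma mean_cont (hcpt : IsCompact (msupport μ)) {σ t : ℝ} (hσ : 0 < σ) :
    Continuous (fun y => N μ σ t y / Z μ σ t y) :=
  (N_cont hcpt hσ).div (Z_cont hcpt hσ) fun y => (Z_pos hcpt σ t y).ne'

lemma mean_le_sSup (hcpt : IsCompact (msupport μ)) (σ t y : ℝ) :
    N μ σ t y / Z μ σ t y ≤ sSup (msupport μ) := by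
  rw [div_le_iff₀ (Z_pos hcpt σ t y), N, Z, ← integral_const_mul]
  refine integral_mono_ae (integrable_cont hcpt (by fun_prop))
    (integrable_cont hcpt (by fun_prop)) ?_
  filter_upwards [ae_le_sSup hcpt] with u hu
  exact mul_le_mul_of_nonneg_right hu (g_pos σ t y u).le

lemma sInf_le_mean (hcpt : IsCompact (msupport μ)) (σ t y : ℝ) :
    sInf (msupport μ) ≤ N μ σ t y / Z μ σ t y := by
  rw [le_div_iff₀ (Z_pos hcpt σ t y), N, Z, ← integral_const_mul]
  refine integral_mono_ae (integrable_cont hcpt (by fun_prop))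
    (integrable_cont hcpt (by fun_prop)) ?_
  filter_upwards [ae_sInf_le hcpt] with u hu
  exact mul_le_mul_of_nonneg_right hu (g_pos σ t y u).le

lemma mean_lower (hcpt : IsCompact (msupport μ)) (σ t y a : ℝ) :
    a - ((∫ u in Set.Iic a, g σ t y u ∂μ) / Z μ σ t y) * (a - sInf (msupport μ))
      ≤ N μ σ t y / Z μ σ t y := by
  set l := sInf (msupport μ) with hl
  have hZp := Z_pos hcpt σ t y
  have hint : Integrable (fun u => g σ t y u) μ := integrable_cont hcpt (g_cont_u σ t y)
  have hintu : Integrable (fun u => u * g σ t y u) μ := integrable_cont hcpt (by fun_prop)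
  set I₁ := ∫ u in Set.Iic a, g σ t y u ∂μ with hI₁
  set I₂ := ∫ u in Set.Ioi a, g σ t y u ∂μ with hI₂
  have hsplitZ : I₁ + I₂ = Z μ σ t y := by
    rw [hI₁, hI₂, Z, ← Set.compl_Iic]
    exact integral_add_compl measurableSet_Iic hint
  have hsplitN : (∫ u in Set.Iic a, u * g σ t y u ∂μ) + (∫ u in Set.Ioi a, u * g σ t y u ∂μ)
      = N μ σ t y := by
    rw [N, ← Set.compl_Iic]
    exact integral_add_compl measurableSet_Iic hintu
  have h1 : l * I₁ ≤ ∫ u in Set.Iic a, u * g σ t y u ∂μ := by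
    rw [hI₁, ← integral_const_mul]
    refine setIntegral_mono_ae (hint.const_mul l).integrableOn hintu.integrableOn ?_
    filter_upwards [ae_sInf_le hcpt] with u hu
    exact mul_le_mul_of_nonneg_right hu (g_pos σ t y u).le
  have h2 : a * I₂ ≤ ∫ u in Set.Ioi a, u * g σ t y u ∂μ := by
    rw [hI₂, ← integral_const_mul]
    refine setIntegral_mono_ae_restrict (hint.const_mul a).integrableOn hintu.integrableOn ?_
    filter_upwards [ae_restrict_mem measurableSet_Ioi] with u hu
    exact mul_le_mul_of_nonneg_right (le_of_lt hu) (g_pos σ t y u).le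
  rw [le_div_iff₀ hZp]
  have hexp : (a - I₁ / Z μ σ t y * (a - l)) * Z μ σ t y = a * Z μ σ t y - I₁ * (a - l) := by
    field_simp
  rw [hexp]
  have hkey : a * Z μ σ t y - I₁ * (a - l) = l * I₁ + a * I₂ := by rw [← hsplitZ]; ring
  rw [hkey]
  linarith [h1, h2, hsplitN]

lemma mean_upper (hcpt : IsCompact (msupport μ)) (σ t y a : ℝ) :
    N μ σ t y / Z μ σ t y
      ≤ a + ((∫ u in Set.Ioi a, g σ t y u ∂μ) / Z μ σ t y) * (sSup (msupport μ) - a) := by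
  set h := sSup (msupport μ) with hh
  have hZp := Z_pos hcpt σ t y
  have hint : Integrable (fun u => g σ t y u) μ := integrable_cont hcpt (g_cont_u σ t y)
  have hintu : Integrable (fun u => u * g σ t y u) μ := integrable_cont hcpt (by fun_prop)
  set I₁ := ∫ u in Set.Iic a, g σ t y u ∂μ with hI₁
  set I₂ := ∫ u in Set.Ioi a, g σ t y u ∂μ with hI₂
  have hsplitZ : I₁ + I₂ = Z μ σ t y := by
    rw [hI₁, hI₂, Z, ← Set.compl_Iic]
    exact integral_add_compl measurableSet_Iic hint
  have hsplitN : (∫ u in Set.Iic a, u * g σ t y u ∂μ) + (∫ u in Set.Ioi a, u * g σ t y u ∂μ)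
      = N μ σ t y := by
    rw [N, ← Set.compl_Iic]
    exact integral_add_compl measurableSet_Iic hintu
  have h1 : (∫ u in Set.Iic a, u * g σ t y u ∂μ) ≤ a * I₁ := by
    rw [hI₁, ← integral_const_mul]
    refine setIntegral_mono_ae_restrict hintu.integrableOn (hint.const_mul a).integrableOn ?_
    filter_upwards [ae_restrict_mem measurableSet_Iic] with u hu
    exact mul_le_mul_of_nonneg_right hu (g_pos σ t y u).le
  have h2 : (∫ u in Set.Ioi a, u * g σ t y u ∂μ) ≤ h * I₂ := by
    rw [hI₂, ← integral_const_mul]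
    refine setIntegral_mono_ae hintu.integrableOn (hint.const_mul h).integrableOn ?_
    filter_upwards [ae_le_sSup hcpt] with u hu
    exact mul_le_mul_of_nonneg_right hu (g_pos σ t y u).le
  rw [div_le_iff₀ hZp]
  have hexp : (a + I₂ / Z μ σ t y * (h - a)) * Z μ σ t y = a * Z μ σ t y + I₂ * (h - a) := by
    field_simp
  rw [hexp]
  have hkey : a * Z μ σ t y + I₂ * (h - a) = a * I₁ + h * I₂ := by rw [← hsplitZ]; ring
  rw [hkey]
  linarith [h1, h2, hsplitN]

lemma ratio_decay_top (hcpt : IsCompact (msupport μ)) {σ t : ℝ} (hσ : 0 < σ) (ht : 0 < t)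
    {R a bb y : ℝ} (hR : ∀ x ∈ msupport μ, |x| ≤ R) (hy : 0 ≤ y)
    (hq : 0 < (μ (Set.Ioi bb)).toReal) :
    (∫ u in Set.Iic a, g σ t y u ∂μ) / Z μ σ t y
      ≤ Real.exp ((2 * (a - bb) * y + R ^ 2 * t) / (2 * σ ^ 2))
        / (μ (Set.Ioi bb)).toReal := by
  set A : ℝ := 2 * a * y / (2 * σ ^ 2) with hA
  set B : ℝ := (2 * bb * y - R ^ 2 * t) / (2 * σ ^ 2) with hB
  have hint : Integrable (fun u => g σ t y u) μ := integrable_cont hcpt (g_cont_u σ t y)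
  have hnum : (∫ u in Set.Iic a, g σ t y u ∂μ) ≤ Real.exp A := by
    calc (∫ u in Set.Iic a, g σ t y u ∂μ) ≤ ∫ _ in Set.Iic a, Real.exp A ∂μ := by
          refine setIntegral_mono_ae_restrict hint.integrableOn
            (integrable_const _).integrableOn ?_
          filter_upwards [ae_restrict_mem measurableSet_Iic] with u hu
          refine Real.exp_le_exp.2 ?_
          rw [hA, div_le_div_iff_of_pos_right (by positivity : (0:ℝ) < 2 * σ ^ 2)]
          nlinarith [mul_nonneg (sub_nonneg.2 hu) hy, mul_nonneg (sq_nonneg u) ht.le]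
      _ = (μ (Set.Iic a)).toReal • Real.exp A := setIntegral_const _
      _ ≤ Real.exp A := by
          rw [smul_eq_mul]
          have h1 : (μ (Set.Iic a)).toReal ≤ 1 := by
            have h2 : μ (Set.Iic a) ≤ 1 := prob_le_one
            simpa using ENNReal.toReal_mono ENNReal.one_ne_top h2
          exact mul_le_of_le_one_left (Real.exp_pos A).le h1
  have hden : Real.exp B * (μ (Set.Ioi bb)).toReal ≤ Z μ σ t y := by
    calc Real.exp B * (μ (Set.Ioi bb)).toReal = ∫ _ in Set.Ioi bb, Real.exp B ∂μ := by
          rw [setIntegral_const, smul_eq_mul, mul_comm]; rfl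
      _ ≤ ∫ u in Set.Ioi bb, g σ t y u ∂μ := by
          refine setIntegral_mono_ae_restrict (integrable_const _).integrableOn
            hint.integrableOn ?_
          filter_upwards [ae_restrict_mem measurableSet_Ioi,
            ae_restrict_of_ae (ae_mem_msupport μ)] with u hu hK
          refine Real.exp_le_exp.2 ?_
          have hu2 : u ^ 2 ≤ R ^ 2 := by nlinarith [hR u hK, abs_nonneg u, sq_abs u]
          rw [hB, div_le_div_iff_of_pos_right (by positivity : (0:ℝ) < 2 * σ ^ 2)]
          nlinarith [mul_nonneg (sub_nonneg.2 (le_of_lt hu)) hy,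
            mul_nonneg (sub_nonneg.2 hu2) ht.le]
      _ ≤ Z μ σ t y := by
          rw [Z]
          exact setIntegral_le_integral hint
            (Filter.Eventually.of_forall fun u => (g_pos σ t y u).le)
  have hd : 0 < Real.exp B * (μ (Set.Ioi bb)).toReal := mul_pos (Real.exp_pos B) hq
  calc (∫ u in Set.Iic a, g σ t y u ∂μ) / Z μ σ t y
      ≤ Real.exp A / (Real.exp B * (μ (Set.Ioi bb)).toReal) :=
        div_le_div₀ (Real.exp_pos A).le hnum hd hden
    _ = Real.exp (A - B) / (μ (Set.Ioi bb)).toReal := by rw [Real.exp_sub, div_div]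
    _ = Real.exp ((2 * (a - bb) * y + R ^ 2 * t) / (2 * σ ^ 2))
        / (μ (Set.Ioi bb)).toReal := by
        rw [hA, hB, div_sub_div_same]
        congr 2
        ring

lemma ratio_decay_bot (hcpt : IsCompact (msupport μ)) {σ t : ℝ} (hσ : 0 < σ) (ht : 0 < t)
    {R a bb y : ℝ} (hR : ∀ x ∈ msupport μ, |x| ≤ R) (hy : y ≤ 0)
    (hq : 0 < (μ (Set.Iio bb)).toReal) :
    (∫ u in Set.Ioi a, g σ t y u ∂μ) / Z μ σ t y
      ≤ Real.exp ((2 * (a - bb) * y + R ^ 2 * t) / (2 * σ ^ 2))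
        / (μ (Set.Iio bb)).toReal := by
  set A : ℝ := 2 * a * y / (2 * σ ^ 2) with hA
  set B : ℝ := (2 * bb * y - R ^ 2 * t) / (2 * σ ^ 2) with hB
  have hint : Integrable (fun u => g σ t y u) μ := integrable_cont hcpt (g_cont_u σ t y)
  have hnum : (∫ u in Set.Ioi a, g σ t y u ∂μ) ≤ Real.exp A := by
    calc (∫ u in Set.Ioi a, g σ t y u ∂μ) ≤ ∫ _ in Set.Ioi a, Real.exp A ∂μ := by
          refine setIntegral_mono_ae_restrict hint.integrableOn
            (integrable_const _).integrableOn ?_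
          filter_upwards [ae_restrict_mem measurableSet_Ioi] with u hu
          refine Real.exp_le_exp.2 ?_
          rw [hA, div_le_div_iff_of_pos_right (by positivity : (0:ℝ) < 2 * σ ^ 2)]
          nlinarith [mul_nonneg (sub_nonneg.2 (le_of_lt hu)) (neg_nonneg.2 hy),
            mul_nonneg (sq_nonneg u) ht.le]
      _ = (μ (Set.Ioi a)).toReal • Real.exp A := setIntegral_const _
      _ ≤ Real.exp A := by
          rw [smul_eq_mul]
          have h1 : (μ (Set.Ioi a)).toReal ≤ 1 := by
            have h2 : μ (Set.Ioi a) ≤ 1 := prob_le_one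
            simpa using ENNReal.toReal_mono ENNReal.one_ne_top h2
          exact mul_le_of_le_one_left (Real.exp_pos A).le h1
  have hden : Real.exp B * (μ (Set.Iio bb)).toReal ≤ Z μ σ t y := by
    calc Real.exp B * (μ (Set.Iio bb)).toReal = ∫ _ in Set.Iio bb, Real.exp B ∂μ := by
          rw [setIntegral_const, smul_eq_mul, mul_comm]; rfl
      _ ≤ ∫ u in Set.Iio bb, g σ t y u ∂μ := by
          refine setIntegral_mono_ae_restrict (integrable_const _).integrableOn
            hint.integrableOn ?_
          filter_upwards [ae_restrict_mem measurableSet_Iio,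
            ae_restrict_of_ae (ae_mem_msupport μ)] with u hu hK
          refine Real.exp_le_exp.2 ?_
          have hu2 : u ^ 2 ≤ R ^ 2 := by nlinarith [hR u hK, abs_nonneg u, sq_abs u]
          rw [hB, div_le_div_iff_of_pos_right (by positivity : (0:ℝ) < 2 * σ ^ 2)]
          nlinarith [mul_nonneg (sub_nonneg.2 (le_of_lt hu)) (neg_nonneg.2 hy),
            mul_nonneg (sub_nonneg.2 hu2) ht.le]
      _ ≤ Z μ σ t y := by
          rw [Z]
          exact setIntegral_le_integral hint
            (Filter.Eventually.of_forall fun u => (g_pos σ t y u).le)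
  have hd : 0 < Real.exp B * (μ (Set.Iio bb)).toReal := mul_pos (Real.exp_pos B) hq
  calc (∫ u in Set.Ioi a, g σ t y u ∂μ) / Z μ σ t y
      ≤ Real.exp A / (Real.exp B * (μ (Set.Iio bb)).toReal) :=
        div_le_div₀ (Real.exp_pos A).le hnum hd hden
    _ = Real.exp (A - B) / (μ (Set.Iio bb)).toReal := by rw [Real.exp_sub, div_div]
    _ = Real.exp ((2 * (a - bb) * y + R ^ 2 * t) / (2 * σ ^ 2))
        / (μ (Set.Iio bb)).toReal := by
        rw [hA, hB, div_sub_div_same]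
        congr 2
        ring

lemma tendsto_mean_atTop (hcpt : IsCompact (msupport μ)) (hnd : ∀ a : ℝ, μ ≠ Measure.dirac a)
    {σ t : ℝ} (hσ : 0 < σ) (ht : 0 < t) :
    Filter.Tendsto (fun y => N μ σ t y / Z μ σ t y) Filter.atTop (nhds (sSup (msupport μ))) := by
  set l := sInf (msupport μ) with hldef
  set h := sSup (msupport μ) with hhdef
  have hlh : l < h := sInf_lt_sSup hcpt hnd
  obtain ⟨R, hR0, hR⟩ := exists_R hcpt
  rw [tendsto_order]
  constructor
  · intro b hb
    set ε₀ : ℝ := min (h - b) (h - l) / 2 with hε₀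
    have hmin : 0 < min (h - b) (h - l) := lt_min (by linarith) (by linarith)
    have hε₀pos : 0 < ε₀ := by rw [hε₀]; positivity
    set a := h - ε₀ with hadef
    set bb := h - ε₀ / 2 with hbbdef
    have hla : l < a := by
      have h1 : ε₀ ≤ (h - l) / 2 := by rw [hε₀]; gcongr; exact min_le_right _ _
      rw [hadef]; linarith
    have hba : b < a := by
      have h1 : ε₀ ≤ (h - b) / 2 := by rw [hε₀]; gcongr; exact min_le_left _ _
      rw [hadef]; linarith
    have habb : a < bb := by rw [hadef, hbbdef]; linarith
    have hbbh : bb < h := by rw [hbbdef]; linarith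
    have hq : 0 < (μ (Set.Ioi bb)).toReal :=
      ENNReal.toReal_pos (measure_Ioi_pos hcpt hbbh).ne' (measure_ne_top μ _)
    set q := (μ (Set.Ioi bb)).toReal with hqdef
    set δ := (a - b) / (a - l) with hδ
    have hδpos : 0 < δ := div_pos (by linarith) (by linarith)
    have hexp0 : Filter.Tendsto
        (fun y => Real.exp ((2 * (a - bb) * y + R ^ 2 * t) / (2 * σ ^ 2)) / q)
        Filter.atTop (nhds 0) := by
      have hcoef : 2 * (a - bb) / (2 * σ ^ 2) < 0 :=
        div_neg_of_neg_of_pos (by linarith) (by positivity)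
      have hlin : Filter.Tendsto
          (fun y : ℝ => 2 * (a - bb) / (2 * σ ^ 2) * y + R ^ 2 * t / (2 * σ ^ 2))
          Filter.atTop Filter.atBot :=
        Filter.tendsto_atBot_add_const_right _ _
          ((tendsto_const_mul_atBot_of_neg hcoef).2 Filter.tendsto_id)
      have hfun : (fun y : ℝ => Real.exp ((2 * (a - bb) * y + R ^ 2 * t) / (2 * σ ^ 2)) / q)
          = fun y : ℝ => Real.exp (2 * (a - bb) / (2 * σ ^ 2) * y + R ^ 2 * t / (2 * σ ^ 2)) / q := by
        funext y
        congr 2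
        ring
      rw [hfun]
      simpa using (Real.tendsto_exp_atBot.comp hlin).div_const q
    have hev := hexp0.eventually_lt_const hδpos
    filter_upwards [hev, Filter.eventually_ge_atTop (0 : ℝ)] with y h1 h2
    have hm := mean_lower hcpt σ t y a
    rw [← hldef] at hm
    have hd := ratio_decay_top hcpt hσ ht (a := a) hR h2 hq
    set p := (∫ u in Set.Iic a, g σ t y u ∂μ) / Z μ σ t y with hp
    have hple : p < δ := lt_of_le_of_lt hd h1
    have hkey : p * (a - l) < a - b := by
      have h3 := mul_lt_mul_of_pos_right hple (show (0:ℝ) < a - l by linarith)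
      rwa [hδ, div_mul_cancel₀ _ (show a - l ≠ 0 by linarith)] at h3
    clear_value p a bb δ q ε₀ l h
    linarith [hm, hkey]
  · intro b hb
    exact Filter.Eventually.of_forall fun y => lt_of_le_of_lt (mean_le_sSup hcpt σ t y) hb

lemma tendsto_mean_atBot (hcpt : IsCompact (msupport μ)) (hnd : ∀ a : ℝ, μ ≠ Measure.dirac a)
    {σ t : ℝ} (hσ : 0 < σ) (ht : 0 < t) :
    Filter.Tendsto (fun y => N μ σ t y / Z μ σ t y) Filter.atBot (nhds (sInf (msupport μ))) := by
  set l := sInf (msupport μ) with hldef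
  set h := sSup (msupport μ) with hhdef
  have hlh : l < h := sInf_lt_sSup hcpt hnd
  obtain ⟨R, hR0, hR⟩ := exists_R hcpt
  rw [tendsto_order]
  constructor
  · intro b hb
    exact Filter.Eventually.of_forall fun y => lt_of_lt_of_le hb (sInf_le_mean hcpt σ t y)
  · intro b hb
    set ε₀ : ℝ := min (b - l) (h - l) / 2 with hε₀
    have hmin : 0 < min (b - l) (h - l) := lt_min (by linarith) (by linarith)
    have hε₀pos : 0 < ε₀ := by rw [hε₀]; positivity
    set a := l + ε₀ with hadef
    set bb := l + ε₀ / 2 with hbbdef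
    have hah : a < h := by
      have h1 : ε₀ ≤ (h - l) / 2 := by rw [hε₀]; gcongr; exact min_le_right _ _
      rw [hadef]; linarith
    have hab : a < b := by
      have h1 : ε₀ ≤ (b - l) / 2 := by rw [hε₀]; gcongr; exact min_le_left _ _
      rw [hadef]; linarith
    have habb : bb < a := by rw [hadef, hbbdef]; linarith
    have hlbb : l < bb := by rw [hbbdef]; linarith
    have hq : 0 < (μ (Set.Iio bb)).toReal :=
      ENNReal.toReal_pos (measure_Iio_pos hcpt hlbb).ne' (measure_ne_top μ _)
    set q := (μ (Set.Iio bb)).toReal with hqdef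
    set δ := (b - a) / (h - a) with hδ
    have hδpos : 0 < δ := div_pos (by linarith) (by linarith)
    have hexp0 : Filter.Tendsto
        (fun y => Real.exp ((2 * (a - bb) * y + R ^ 2 * t) / (2 * σ ^ 2)) / q)
        Filter.atBot (nhds 0) := by
      have hcoef : 0 < 2 * (a - bb) / (2 * σ ^ 2) :=
        div_pos (by linarith) (by positivity)
      have hlin : Filter.Tendsto
          (fun y : ℝ => 2 * (a - bb) / (2 * σ ^ 2) * y + R ^ 2 * t / (2 * σ ^ 2))
          Filter.atBot Filter.atBot :=
        Filter.tendsto_atBot_add_const_right _ _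
          ((tendsto_const_mul_atBot_of_pos hcoef).2 Filter.tendsto_id)
      have hfun : (fun y : ℝ => Real.exp ((2 * (a - bb) * y + R ^ 2 * t) / (2 * σ ^ 2)) / q)
          = fun y : ℝ => Real.exp (2 * (a - bb) / (2 * σ ^ 2) * y + R ^ 2 * t / (2 * σ ^ 2)) / q := by
        funext y
        congr 2
        ring
      rw [hfun]
      simpa using (Real.tendsto_exp_atBot.comp hlin).div_const q
    have hev := hexp0.eventually_lt_const hδpos
    filter_upwards [hev, Filter.eventually_le_atBot (0 : ℝ)] with y h1 h2
    have hm := mean_upper hcpt σ t y a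
    rw [← hhdef] at hm
    have hd := ratio_decay_bot hcpt hσ ht (a := a) hR h2 hq
    set p := (∫ u in Set.Ioi a, g σ t y u ∂μ) / Z μ σ t y with hp
    have hple : p < δ := lt_of_le_of_lt hd h1
    have hkey : p * (h - a) < b - a := by
      have h3 := mul_lt_mul_of_pos_right hple (show (0:ℝ) < h - a by linarith)
      rwa [hδ, div_mul_cancel₀ _ (show h - a ≠ 0 by linarith)] at h3
    clear_value p a bb δ q ε₀ l h
    linarith [hm, hkey]

end PostAux


/-- For a compactly supported, non-Dirac prior, the posterior mean `y ↦ m(y)` is a continuous,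
strictly increasing bijection from `ℝ` onto `(l, h)`, with limits `l` at `−∞` and `h` at `+∞`,
where `l = inf supp(μ)` and `h = sup supp(μ)`. -/
theorem posterior_mean_bijection_onto_Ioo
    (μ : Measure ℝ) [IsProbabilityMeasure μ] (hcpt : IsCompact (msupport μ))
    (hnd : ∀ a : ℝ, μ ≠ Measure.dirac a)
    (σ t : ℝ) (hσ : 0 < σ) (ht : 0 < t) :
    Filter.Tendsto (fun y : ℝ => ∫ u, u ∂(posterior μ σ t y)) Filter.atBot
        (nhds (sInf (msupport μ))) ∧
      Filter.Tendsto (fun y : ℝ => ∫ u, u ∂(posterior μ σ t y)) Filter.atTop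
        (nhds (sSup (msupport μ))) ∧
      Continuous (fun y : ℝ => ∫ u, u ∂(posterior μ σ t y)) ∧
      StrictMono (fun y : ℝ => ∫ u, u ∂(posterior μ σ t y)) ∧
      Set.range (fun y : ℝ => ∫ u, u ∂(posterior μ σ t y)) =
        Set.Ioo (sInf (msupport μ)) (sSup (msupport μ)) := by
  have hfeq : (fun y : ℝ => ∫ u, u ∂(posterior μ σ t y))
      = fun y => PostAux.N μ σ t y / PostAux.Z μ σ t y :=
    funext fun y => PostAux.mean_eq hcpt σ t y
  have hmono : StrictMono (fun y : ℝ => PostAux.N μ σ t y / PostAux.Z μ σ t y) := by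
    intro y₁ y₂ h12
    simp only
    rw [div_lt_div_iff₀ (PostAux.Z_pos hcpt σ t y₁) (PostAux.Z_pos hcpt σ t y₂)]
    exact PostAux.key_lt μ hcpt hnd hσ ht h12
  have hcont := PostAux.mean_cont hcpt (σ := σ) (t := t) hσ
  have htop := PostAux.tendsto_mean_atTop hcpt hnd hσ ht
  have hbot := PostAux.tendsto_mean_atBot hcpt hnd hσ ht
  rw [hfeq]
  refine ⟨hbot, htop, hcont, hmono, ?_⟩
  ext x
  simp only [Set.mem_range, Set.mem_Ioo]
  constructor
  · rintro ⟨y, rfl⟩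
    refine ⟨lt_of_le_of_lt (PostAux.sInf_le_mean hcpt σ t (y - 1))
      (hmono (by linarith : y - 1 < y)),
      lt_of_lt_of_le (hmono (by linarith : y < y + 1))
      (PostAux.mean_le_sSup hcpt σ t (y + 1))⟩
  · rintro ⟨hx1, hx2⟩
    obtain ⟨A, hA⟩ := (hbot.eventually_lt_const hx1).exists
    obtain ⟨B, hB⟩ := (htop.eventually_const_lt hx2).exists
    have hAB : A ≤ B := le_of_lt (hmono.lt_iff_lt.1 (lt_trans hA hB))
    obtain ⟨y, _, hy⟩ := intermediate_value_Icc hAB hcont.continuousOn ⟨hA.le, hB.le⟩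
    exact ⟨y, hy⟩
end
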